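/- arXiv:0808.3627 — 10 statements merged into one kernel-verified Lean document; each statement's English description precedes it below -/
import Mathlib

section
/- Let (f₁, f₀): H• → G• be a strict morphism of crossed modules. Form the semidirect product E = H₀ ⋉ G₁ with product (y₀, g₀)(y₁, g₁) = (y₀y₁, g₀^{f₀(y₁)} g₁). Define π(y, g) = y, ι(g) = (1, g), κ(h) = (∂_H(h), f₁(h)⁻¹), and j(y, g) = f₀(y)·∂_G(g). Then ([H•, E, G•], κ, ι, π, j) is a butterfly from H• to G•. -/
/-!
`E = H₀ ⋉ G₁` is the semidirect product for the right action `g ↦ g^{f₀ y}` of `H₀` on `G₁`.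
Its projection to `H₀` is split surjective with kernel `ι G₁`, and `j` is multiplicative because
`∂_G` is `G₀`-equivariant. That `κ` is a homomorphism and that `ι` and `κ` are equivariant both come
down to the Peiffer identity `g^{∂_G g'} = g'⁻¹ g g'`, together with `∂_G ∘ f₁ = f₀ ∘ ∂_H` and
`f₁(h^x) = f₁(h)^{f₀ x}`.
-/

structure IsRightDistribAction {N A : Type*} [Group N] [Monoid A] (act : N → A → N) : Prop where
  act_one : ∀ g, act g 1 = g
  act_mul : ∀ g x y, act g (x * y) = act (act g x) y
  mul_act : ∀ g g' x, act (g * g') x = act g x * act g' x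

def semidirectMul {N A : Type*} [Mul N] [Mul A] (act : N → A → N) (p q : A × N) : A × N :=
  (p.1 * q.1, act p.2 q.1 * q.2)

namespace IsRightDistribAction

variable {N A : Type*} [Group N] [Group A] {act : N → A → N}

theorem one_act (hact : IsRightDistribAction act) (x : A) : act 1 x = 1 :=
  map_one (MonoidHom.mk' (act · x) fun g g' => hact.mul_act g g' x)

theorem inv_act (hact : IsRightDistribAction act) (g : N) (x : A) : act g⁻¹ x = (act g x)⁻¹ :=
  map_inv (MonoidHom.mk' (act · x) fun g g' => hact.mul_act g g' x) g

theorem comp {B : Type*} [Group B] (hact : IsRightDistribAction act) (f : B →* A) :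
    IsRightDistribAction fun g y => act g (f y) where
  act_one g := by rw [map_one, hact.act_one]
  act_mul g x y := by rw [map_mul, hact.act_mul]
  mul_act g g' x := hact.mul_act g g' (f x)

theorem semidirectMul_assoc (hact : IsRightDistribAction act) (p q r : A × N) :
    semidirectMul act (semidirectMul act p q) r = semidirectMul act p (semidirectMul act q r) := by
  simp only [semidirectMul, hact.mul_act, hact.act_mul, mul_assoc]

theorem one_semidirectMul (hact : IsRightDistribAction act) (p : A × N) :
    semidirectMul act (1, 1) p = p :=
  Prod.ext (one_mul p.1) <| show act 1 p.1 * p.2 = p.2 by rw [hact.one_act, one_mul]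

theorem semidirectMul_one (hact : IsRightDistribAction act) (p : A × N) :
    semidirectMul act p (1, 1) = p :=
  Prod.ext (mul_one p.1) <| show act p.2 1 * 1 = p.2 by rw [hact.act_one, mul_one]

theorem exists_semidirectMul_eq_one (hact : IsRightDistribAction act) (p : A × N) :
    ∃ q, semidirectMul act p q = (1, 1) ∧ semidirectMul act q p = (1, 1) := by
  refine ⟨(p.1⁻¹, (act p.2 p.1⁻¹)⁻¹), Prod.ext (mul_inv_cancel p.1) (mul_inv_cancel _),
    Prod.ext (inv_mul_cancel p.1) ?_⟩
  change act (act p.2 p.1⁻¹)⁻¹ p.1 * p.2 = 1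
  rw [hact.inv_act, ← hact.act_mul, inv_mul_cancel, hact.act_one, inv_mul_cancel]

theorem semidirectMul_mk_one (hact : IsRightDistribAction act) (g g' : N) :
    semidirectMul act (1, g) (1, g') = (1, g * g') := by
  rw [semidirectMul, mul_one, hact.act_one]

theorem semidirectMul_conj (hact : IsRightDistribAction act) {p q : A × N}
    (hqp : semidirectMul act q p = (1, 1)) (x : A) (n : N) :
    semidirectMul act (semidirectMul act q (x, n)) p =
      (p.1⁻¹ * x * p.1, (act p.2 (p.1⁻¹ * x * p.1))⁻¹ * act n p.1 * p.2) := by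
  obtain ⟨hq₁, hq₂⟩ := Prod.ext_iff.mp hqp
  have hq₁ : q.1 = p.1⁻¹ := eq_inv_of_mul_eq_one_left hq₁
  have hq₂ : act q.2 p.1 = p.2⁻¹ := eq_inv_of_mul_eq_one_left hq₂
  have hx : x * p.1 = p.1 * (p.1⁻¹ * x * p.1) := by group
  have hq₂x : act (act q.2 x) p.1 = (act p.2 (p.1⁻¹ * x * p.1))⁻¹ := by
    rw [← hact.act_mul, hx, hact.act_mul, hq₂, hact.inv_act]
  refine Prod.ext ?_ ?_
  · change q.1 * x * p.1 = _
    rw [hq₁]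
  · change act (act q.2 x * n) p.1 * p.2 = _
    rw [hact.mul_act, hq₂x]

end IsRightDistribAction

structure IsCrossedModule {G₁ G₀ : Type*} [Group G₁] [Group G₀] (δ : G₁ →* G₀)
    (act : G₁ → G₀ → G₁) : Prop extends IsRightDistribAction act where
  map_act : ∀ g x, δ (act g x) = x⁻¹ * δ g * x
  act_map : ∀ g₀ g₁, act g₀ (δ g₁) = g₁⁻¹ * g₀ * g₁

section Butterfly

variable {H₁ H₀ G₁ G₀ : Type*} [Group H₁] [Group H₀] [Group G₁] [Group G₀]
  {δH : H₁ →* H₀} {δG : G₁ →* G₀} {aG : G₁ → G₀ → G₁} {f₁ : H₁ →* G₁} {f₀ : H₀ →* G₀}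

def butterflyJ (δG : G₁ →* G₀) (f₀ : H₀ →* G₀) (p : H₀ × G₁) : G₀ := f₀ p.1 * δG p.2

def butterflyKappa (δH : H₁ →* H₀) (f₁ : H₁ →* G₁) (h : H₁) : H₀ × G₁ := (δH h, (f₁ h)⁻¹)

theorem butterflyJ_semidirectMul (hδG : ∀ g x, δG (aG g x) = x⁻¹ * δG g * x) (p q : H₀ × G₁) :
    butterflyJ δG f₀ (semidirectMul (fun g y => aG g (f₀ y)) p q) =
      butterflyJ δG f₀ p * butterflyJ δG f₀ q := by
  simp only [butterflyJ, semidirectMul, map_mul, hδG]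
  group

theorem butterflyKappa_mul (hpfG : ∀ g₀ g₁, aG g₀ (δG g₁) = g₁⁻¹ * g₀ * g₁)
    (hf : ∀ h, δG (f₁ h) = f₀ (δH h)) (h h' : H₁) :
    butterflyKappa δH f₁ (h * h') =
      semidirectMul (fun g y => aG g (f₀ y)) (butterflyKappa δH f₁ h) (butterflyKappa δH f₁ h') := by
  refine Prod.ext (map_mul δH h h') ?_
  simp only [butterflyKappa, semidirectMul, ← hf, hpfG, map_mul]
  group

theorem butterflyJ_kappa (hf : ∀ h, δG (f₁ h) = f₀ (δH h)) (h : H₁) :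
    butterflyJ δG f₀ (butterflyKappa δH f₁ h) = 1 := by
  rw [butterflyJ, butterflyKappa, map_inv, hf, mul_inv_cancel]

theorem mk_one_act_butterflyJ (hG : IsCrossedModule δG aG) {p q : H₀ × G₁}
    (hqp : semidirectMul (fun g y => aG g (f₀ y)) q p = (1, 1)) (g : G₁) :
    ((1 : H₀), aG g (butterflyJ δG f₀ p)) =
      semidirectMul (fun g y => aG g (f₀ y)) (semidirectMul (fun g y => aG g (f₀ y)) q (1, g)) p := by
  rw [(hG.comp f₀).semidirectMul_conj hqp, butterflyJ, hG.act_mul, hG.act_map]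
  simp [hG.act_one]

theorem butterflyKappa_act {aH : H₁ → H₀ → H₁} (hG : IsCrossedModule δG aG)
    (hδH : ∀ (h : H₁) x, δH (aH h x) = x⁻¹ * δH h * x) (hf : ∀ h, δG (f₁ h) = f₀ (δH h))
    (hfe : ∀ h x, f₁ (aH h x) = aG (f₁ h) (f₀ x)) {p q : H₀ × G₁}
    (hqp : semidirectMul (fun g y => aG g (f₀ y)) q p = (1, 1)) (h : H₁) :
    butterflyKappa δH f₁ (aH h p.1) =
      semidirectMul (fun g y => aG g (f₀ y))
        (semidirectMul (fun g y => aG g (f₀ y)) q (butterflyKappa δH f₁ h)) p := by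
  have hδ : p.1⁻¹ * δH h * p.1 = δH (aH h p.1) := (hδH h p.1).symm
  rw [(hG.comp f₀).semidirectMul_conj hqp]
  refine Prod.ext hδ.symm ?_
  change (f₁ (aH h p.1))⁻¹ = (aG p.2 (f₀ (p.1⁻¹ * δH h * p.1)))⁻¹ * aG (f₁ h)⁻¹ (f₀ p.1) * p.2
  rw [hδ, ← hf, hG.act_map, hfe, hG.inv_act]
  group

end Butterfly

theorem strict_morphism_gives_butterfly_general
    {H₁ H₀ G₁ G₀ : Type*} [Group H₁] [Group H₀] [Group G₁] [Group G₀]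
    (δH : H₁ →* H₀) (aH : H₁ → H₀ → H₁)
    (hδH : ∀ h x, δH (aH h x) = x⁻¹ * δH h * x)
    (δG : G₁ →* G₀) (aG : G₁ → G₀ → G₁)
    (haG1 : ∀ g, aG g 1 = g)
    (haGmul : ∀ g x y, aG g (x * y) = aG (aG g x) y)
    (haGhom : ∀ g g' x, aG (g * g') x = aG g x * aG g' x)
    (hδG : ∀ g x, δG (aG g x) = x⁻¹ * δG g * x)
    (hpfG : ∀ g₀ g₁, aG g₀ (δG g₁) = g₁⁻¹ * g₀ * g₁)
    (f₁ : H₁ →* G₁) (f₀ : H₀ →* G₀)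
    (hf : ∀ h, δG (f₁ h) = f₀ (δH h))
    (hfe : ∀ h x, f₁ (aH h x) = aG (f₁ h) (f₀ x))
    (m : (H₀ × G₁) → (H₀ × G₁) → (H₀ × G₁))
    (hm : ∀ p q, m p q = (p.1 * q.1, aG p.2 (f₀ q.1) * q.2))
    (πm : H₀ × G₁ → H₀) (hπm : ∀ p, πm p = p.1)
    (ιm : G₁ → H₀ × G₁) (hιm : ∀ g, ιm g = ((1 : H₀), g))
    (κm : H₁ → H₀ × G₁) (hκm : ∀ h, κm h = (δH h, (f₁ h)⁻¹))
    (jm : H₀ × G₁ → G₀) (hjm : ∀ p, jm p = f₀ p.1 * δG p.2) :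
    (∀ p q r, m (m p q) r = m p (m q r)) ∧
    (∀ p, m ((1 : H₀), (1 : G₁)) p = p ∧ m p ((1 : H₀), (1 : G₁)) = p) ∧
    (∀ p, ∃ q, m p q = ((1 : H₀), (1 : G₁)) ∧ m q p = ((1 : H₀), (1 : G₁))) ∧
    (∀ p q, πm (m p q) = πm p * πm q) ∧
    (∀ p q, jm (m p q) = jm p * jm q) ∧
    (∀ g g', ιm (g * g') = m (ιm g) (ιm g')) ∧
    (∀ h h', κm (h * h') = m (κm h) (κm h')) ∧
    (∀ h, πm (κm h) = δH h) ∧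
    (∀ g, jm (ιm g) = δG g) ∧
    (∀ h, jm (κm h) = 1) ∧
    (∀ g, πm (ιm g) = 1) ∧
    Function.Injective ιm ∧
    (∀ p, πm p = 1 → ∃ g, p = ιm g) ∧
    Function.Surjective πm ∧
    (∀ g p q, m p q = ((1 : H₀), (1 : G₁)) → m q p = ((1 : H₀), (1 : G₁)) →
      ιm (aG g (jm p)) = m (m q (ιm g)) p) ∧
    (∀ h p q, m p q = ((1 : H₀), (1 : G₁)) → m q p = ((1 : H₀), (1 : G₁)) →
      κm (aH h (πm p)) = m (m q (κm h)) p) := by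
  have hG : IsCrossedModule δG aG := ⟨⟨haG1, haGmul, haGhom⟩, hδG, hpfG⟩
  have hE := hG.comp f₀
  obtain rfl : m = semidirectMul fun g y => aG g (f₀ y) := funext₂ hm
  obtain rfl : πm = Prod.fst := funext hπm
  obtain rfl : ιm = Prod.mk 1 := funext hιm
  obtain rfl : κm = butterflyKappa δH f₁ := funext hκm
  obtain rfl : jm = butterflyJ δG f₀ := funext hjm
  exact ⟨hE.semidirectMul_assoc, fun p => ⟨hE.one_semidirectMul p, hE.semidirectMul_one p⟩,
    hE.exists_semidirectMul_eq_one, fun _ _ => rfl, butterflyJ_semidirectMul hδG,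
    fun g g' => (hE.semidirectMul_mk_one g g').symm, butterflyKappa_mul hpfG hf, fun _ => rfl,
    fun g => by rw [butterflyJ, map_one, one_mul], butterflyJ_kappa hf, fun _ => rfl,
    Prod.mk_right_injective 1, fun p hp => ⟨p.2, Prod.ext hp rfl⟩, Prod.fst_surjective,
    fun g _ _ _ hqp => mk_one_act_butterflyJ hG hqp g,
    fun h _ _ _ hqp => butterflyKappa_act hG hδH hf hfe hqp h⟩

theorem strict_morphism_gives_butterfly
    {H₁ H₀ G₁ G₀ : Type*} [Group H₁] [Group H₀] [Group G₁] [Group G₀]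
    (δH : H₁ →* H₀) (aH : H₁ → H₀ → H₁)
    (haH1 : ∀ h, aH h 1 = h)
    (haHmul : ∀ h x y, aH h (x * y) = aH (aH h x) y)
    (haHhom : ∀ h h' x, aH (h * h') x = aH h x * aH h' x)
    (hδH : ∀ h x, δH (aH h x) = x⁻¹ * δH h * x)
    (hpfH : ∀ h₀ h₁, aH h₀ (δH h₁) = h₁⁻¹ * h₀ * h₁)
    (δG : G₁ →* G₀) (aG : G₁ → G₀ → G₁)
    (haG1 : ∀ g, aG g 1 = g)
    (haGmul : ∀ g x y, aG g (x * y) = aG (aG g x) y)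
    (haGhom : ∀ g g' x, aG (g * g') x = aG g x * aG g' x)
    (hδG : ∀ g x, δG (aG g x) = x⁻¹ * δG g * x)
    (hpfG : ∀ g₀ g₁, aG g₀ (δG g₁) = g₁⁻¹ * g₀ * g₁)
    (f₁ : H₁ →* G₁) (f₀ : H₀ →* G₀)
    (hf : ∀ h, δG (f₁ h) = f₀ (δH h))
    (hfe : ∀ h x, f₁ (aH h x) = aG (f₁ h) (f₀ x))
    (m : (H₀ × G₁) → (H₀ × G₁) → (H₀ × G₁))
    (hm : ∀ p q, m p q = (p.1 * q.1, aG p.2 (f₀ q.1) * q.2))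
    (πm : H₀ × G₁ → H₀) (hπm : ∀ p, πm p = p.1)
    (ιm : G₁ → H₀ × G₁) (hιm : ∀ g, ιm g = ((1 : H₀), g))
    (κm : H₁ → H₀ × G₁) (hκm : ∀ h, κm h = (δH h, (f₁ h)⁻¹))
    (jm : H₀ × G₁ → G₀) (hjm : ∀ p, jm p = f₀ p.1 * δG p.2) :
    (∀ p q r, m (m p q) r = m p (m q r)) ∧
    (∀ p, m ((1 : H₀), (1 : G₁)) p = p ∧ m p ((1 : H₀), (1 : G₁)) = p) ∧
    (∀ p, ∃ q, m p q = ((1 : H₀), (1 : G₁)) ∧ m q p = ((1 : H₀), (1 : G₁))) ∧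
    (∀ p q, πm (m p q) = πm p * πm q) ∧
    (∀ p q, jm (m p q) = jm p * jm q) ∧
    (∀ g g', ιm (g * g') = m (ιm g) (ιm g')) ∧
    (∀ h h', κm (h * h') = m (κm h) (κm h')) ∧
    (∀ h, πm (κm h) = δH h) ∧
    (∀ g, jm (ιm g) = δG g) ∧
    (∀ h, jm (κm h) = 1) ∧
    (∀ g, πm (ιm g) = 1) ∧
    Function.Injective ιm ∧
    (∀ p, πm p = 1 → ∃ g, p = ιm g) ∧
    Function.Surjective πm ∧
    (∀ g p q, m p q = ((1 : H₀), (1 : G₁)) → m q p = ((1 : H₀), (1 : G₁)) →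
      ιm (aG g (jm p)) = m (m q (ιm g)) p) ∧
    (∀ h p q, m p q = ((1 : H₀), (1 : G₁)) → m q p = ((1 : H₀), (1 : G₁)) →
      κm (aH h (πm p)) = m (m q (κm h)) p) :=
  strict_morphism_gives_butterfly_general δH aH hδH δG aG haG1 haGmul haGhom hδG hpfG f₁ f₀ hf hfe m
    hm πm hπm ιm hιm κm hκm jm hjm
end

section
/- Let [H•, E, G•] be a butterfly equipped with a group homomorphism s: H₀ → E such that π ∘ s = id_{H₀} (a splitting). Define f₀ = j ∘ s: H₀ → G₀, and for each h ∈ H₁ let f₁(h) ∈ G₁ be the unique element with s(∂_H h) = κ(h) · ι(f₁(h)). Then f₁ is well defined, f₁: H₁ → G₁ is a group homomorphism, ∂_G ∘ f₁ = f₀ ∘ ∂_H, and f₁(h^x) = f₁(h)^{f₀(x)} for all h ∈ H₁, x ∈ H₀; that is, (f₁, f₀) is a strict morphism of crossed modules. -/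
/-! Writing `φ = s ∘ ∂_H`, both `φ h` and `κ h` lie over `∂_H h`, so they differ by a unique element
of `ker π = ι(G₁)`; this defines `f₁ h`. Since `j ∘ κ` is trivial, the equivariance of `ι` makes
`ι(G₁)` commute with `κ(H₁)`, so the factorisation `φ = κ · (ι ∘ f₁)` is compatible with products;
and conjugating by `s x` preserves it, by the equivariance of `κ` and `ι`. Uniqueness of the factor
then gives that `f₁` is a homomorphism and is equivariant along `f₀ = j ∘ s`. -/

section Factorisation

variable {H₁ E G₁ : Type*} [Group H₁] [Group E] [Group G₁]

theorem existsUnique_eq_mul_of_map_eq {H₀ : Type*} [Group H₀] {π : E →* H₀} {ι : G₁ →* E}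
    (hι : Function.Injective ι) (hker : ∀ e, π e = 1 → ∃ g, e = ι g) {a b : E}
    (hab : π a = π b) : ∃! g, b = a * ι g := by
  obtain ⟨g, hg⟩ := hker (a⁻¹ * b) (by rw [map_mul, map_inv, hab, inv_mul_cancel])
  refine ⟨g, show b = a * ι g by rw [← hg, mul_inv_cancel_left], fun g' hg' => hι ?_⟩
  rw [← hg, hg', inv_mul_cancel_left]

theorem commute_of_map_eq_one {G₀ : Type*} [Group G₀] {ι : G₁ →* E} {j : E →* G₀}
    {act : G₁ → G₀ → G₁} (hact : ∀ g, act g 1 = g)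
    (hconj : ∀ g e, ι (act g (j e)) = e⁻¹ * ι g * e) (g : G₁) {e : E} (he : j e = 1) :
    Commute (ι g) e := by
  have hfix : ι g = e⁻¹ * ι g * e := by rw [← hconj, he, hact]
  calc ι g * e = e * (e⁻¹ * ι g * e) := by group
    _ = e * ι g := by rw [← hfix]

variable {φ κ : H₁ →* E} {ι : G₁ →* E} {f : H₁ → G₁}

theorem factor_eq (hι : Function.Injective ι) (hf : ∀ h, φ h = κ h * ι (f h)) {h : H₁}
    {g : G₁} (hg : φ h = κ h * ι g) : f h = g :=
  hι <| mul_left_cancel ((hf h).symm.trans hg)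

theorem factor_mul (hι : Function.Injective ι) (hcomm : ∀ g h, Commute (ι g) (κ h))
    (hf : ∀ h, φ h = κ h * ι (f h)) (h h' : H₁) : f (h * h') = f h * f h' :=
  factor_eq hι hf <| calc
    φ (h * h') = κ h * ι (f h) * (κ h' * ι (f h')) := by rw [map_mul, hf, hf]
    _ = κ h * κ h' * (ι (f h) * ι (f h')) := (hcomm _ _).mul_mul_mul_comm _ _
    _ = κ (h * h') * ι (f h * f h') := by rw [map_mul, map_mul]

theorem factor_conj (hι : Function.Injective ι) (hf : ∀ h, φ h = κ h * ι (f h)) {h h' : H₁}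
    {g' : G₁} (e : E) (hφ : φ h' = e⁻¹ * φ h * e) (hκ : κ h' = e⁻¹ * κ h * e)
    (hg' : ι g' = e⁻¹ * ι (f h) * e) : f h' = g' :=
  factor_eq hι hf <| by rw [hφ, hκ, hg', hf]; group

end Factorisation

theorem split_butterfly_gives_strict_morphism_general
    {H₁ H₀ G₁ G₀ : Type*} [Group H₁] [Group H₀] [Group G₁] [Group G₀]
    (δH : H₁ →* H₀) (aH : H₁ → H₀ → H₁)
    (hδH : ∀ h x, δH (aH h x) = x⁻¹ * δH h * x)
    (δG : G₁ →* G₀) (aG : G₁ → G₀ → G₁)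
    (haG1 : ∀ g, aG g 1 = g)
    {E : Type*} [Group E]
    (κ : H₁ →* E) (ι : G₁ →* E) (π : E →* H₀) (j : E →* G₀)
    (hπκ : ∀ h, π (κ h) = δH h)
    (hjι : ∀ g, j (ι g) = δG g)
    (hjκ : ∀ h, j (κ h) = 1)
    (hιinj : Function.Injective ι)
    (hkerπ : ∀ e, π e = 1 → ∃ g, e = ι g)
    (heqι : ∀ g e, ι (aG g (j e)) = e⁻¹ * ι g * e)
    (heqκ : ∀ h e, κ (aH h (π e)) = e⁻¹ * κ h * e)
    (s : H₀ →* E) (hs : ∀ x, π (s x) = x) :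
    (∀ h : H₁, ∃! g : G₁, s (δH h) = κ h * ι g) ∧
    (∀ f₁ : H₁ → G₁, (∀ h, s (δH h) = κ h * ι (f₁ h)) →
      (∀ h h', f₁ (h * h') = f₁ h * f₁ h') ∧
      (∀ h, δG (f₁ h) = j (s (δH h))) ∧
      (∀ h x, f₁ (aH h x) = aG (f₁ h) (j (s x)))) := by
  have hcomm : ∀ g h, Commute (ι g) (κ h) :=
    fun g h => commute_of_map_eq_one haG1 heqι g (hjκ h)
  refine ⟨fun h => existsUnique_eq_mul_of_map_eq hιinj hkerπ (by rw [hπκ, hs]),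
    fun f₁ hf₁ => ⟨factor_mul (φ := s.comp δH) hιinj hcomm hf₁, fun h => ?_, fun h x => ?_⟩⟩
  · rw [hf₁, map_mul, hjκ, hjι, one_mul]
  · refine factor_conj (φ := s.comp δH) hιinj hf₁ (s x) ?_ ?_ (heqι _ _)
    · simp only [MonoidHom.comp_apply, hδH, map_mul, map_inv]
    · simpa only [hs] using heqκ h (s x)

theorem split_butterfly_gives_strict_morphism
    {H₁ H₀ G₁ G₀ : Type*} [Group H₁] [Group H₀] [Group G₁] [Group G₀]
    (δH : H₁ →* H₀) (aH : H₁ → H₀ → H₁)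
    (haH1 : ∀ h, aH h 1 = h)
    (haHmul : ∀ h x y, aH h (x * y) = aH (aH h x) y)
    (haHhom : ∀ h h' x, aH (h * h') x = aH h x * aH h' x)
    (hδH : ∀ h x, δH (aH h x) = x⁻¹ * δH h * x)
    (hpfH : ∀ h₀ h₁, aH h₀ (δH h₁) = h₁⁻¹ * h₀ * h₁)
    (δG : G₁ →* G₀) (aG : G₁ → G₀ → G₁)
    (haG1 : ∀ g, aG g 1 = g)
    (haGmul : ∀ g x y, aG g (x * y) = aG (aG g x) y)
    (haGhom : ∀ g g' x, aG (g * g') x = aG g x * aG g' x)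
    (hδG : ∀ g x, δG (aG g x) = x⁻¹ * δG g * x)
    (hpfG : ∀ g₀ g₁, aG g₀ (δG g₁) = g₁⁻¹ * g₀ * g₁)
    {E : Type*} [Group E]
    (κ : H₁ →* E) (ι : G₁ →* E) (π : E →* H₀) (j : E →* G₀)
    (hπκ : ∀ h, π (κ h) = δH h)
    (hjι : ∀ g, j (ι g) = δG g)
    (hjκ : ∀ h, j (κ h) = 1)
    (hπι : ∀ g, π (ι g) = 1)
    (hιinj : Function.Injective ι)
    (hkerπ : ∀ e, π e = 1 → ∃ g, e = ι g)
    (hπsurj : Function.Surjective π)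
    (heqι : ∀ g e, ι (aG g (j e)) = e⁻¹ * ι g * e)
    (heqκ : ∀ h e, κ (aH h (π e)) = e⁻¹ * κ h * e)
    (s : H₀ →* E) (hs : ∀ x, π (s x) = x) :
    (∀ h : H₁, ∃! g : G₁, s (δH h) = κ h * ι g) ∧
    (∀ f₁ : H₁ → G₁, (∀ h, s (δH h) = κ h * ι (f₁ h)) →
      (∀ h h', f₁ (h * h') = f₁ h * f₁ h') ∧
      (∀ h, δG (f₁ h) = j (s (δH h))) ∧
      (∀ h x, f₁ (aH h x) = aG (f₁ h) (j (s x)))) :=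
  split_butterfly_gives_strict_morphism_general δH aH hδH δG aG haG1 κ ι π j hπκ hjι hjκ hιinj hkerπ
    heqι heqκ s hs
end

section
/- Let [H•, E, G•] be a butterfly. Define the homomorphism δ: H₁ × G₁ → E by δ(h, g) = κ(h)·ι(g), and let E act on H₁ × G₁ by (h, g)^e = (h^{π(e)}, g^{j(e)}). Then δ is a group homomorphism from the direct product H₁ × G₁ (this uses that im κ and im ι commute), the action is by group automorphisms, and (δ: H₁ × G₁ → E) with this action is a crossed module, i.e. δ((h,g)^e) = e⁻¹ δ(h,g) e and (h₀,g₀)^{δ(h₁,g₁)} = (h₁,g₁)⁻¹ (h₀,g₀) (h₁,g₁). -/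
/-!
An element of `ker j` acts trivially on `G₁`, so the `E`-equivariance of `ι` says that it commutes
with `im ι`; in particular `im κ ⊆ ker j` commutes with `im ι`, which makes `δ` a homomorphism on
the direct product. Since `π ∘ δ` and `j ∘ δ` are `∂_H` and `∂_G` on the two factors, the action and
Peiffer identities for `δ` hold componentwise by those of the two crossed modules.
-/

theorem commute_of_map_eq_one_of_conj_equivariant {G₁ G₀ E : Type*} [Group G₁] [Group G₀]
    [Group E] (aG : G₁ → G₀ → G₁) (haG1 : ∀ g, aG g 1 = g) (ι : G₁ →* E) (j : E →* G₀)
    (heqι : ∀ g e, ι (aG g (j e)) = e⁻¹ * ι g * e) {x : E} (hx : j x = 1) (g : G₁) :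
    Commute x (ι g) := by
  have hconj : ι g = x⁻¹ * ι g * x := by rw [← heqι, hx, haG1]
  calc x * ι g = x * (x⁻¹ * ι g * x) := by rw [← hconj]
    _ = ι g * x := by group

theorem butterfly_diagonal_crossed_module_general
    {H₁ H₀ G₁ G₀ : Type*} [Group H₁] [Group H₀] [Group G₁] [Group G₀]
    (δH : H₁ →* H₀) (aH : H₁ → H₀ → H₁)
    (haH1 : ∀ h, aH h 1 = h)
    (haHmul : ∀ h x y, aH h (x * y) = aH (aH h x) y)
    (haHhom : ∀ h h' x, aH (h * h') x = aH h x * aH h' x)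
    (hpfH : ∀ h₀ h₁, aH h₀ (δH h₁) = h₁⁻¹ * h₀ * h₁)
    (δG : G₁ →* G₀) (aG : G₁ → G₀ → G₁)
    (haG1 : ∀ g, aG g 1 = g)
    (haGmul : ∀ g x y, aG g (x * y) = aG (aG g x) y)
    (haGhom : ∀ g g' x, aG (g * g') x = aG g x * aG g' x)
    (hpfG : ∀ g₀ g₁, aG g₀ (δG g₁) = g₁⁻¹ * g₀ * g₁)
    {E : Type*} [Group E]
    (κ : H₁ →* E) (ι : G₁ →* E) (π : E →* H₀) (j : E →* G₀)
    (hπκ : ∀ h, π (κ h) = δH h)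
    (hjι : ∀ g, j (ι g) = δG g)
    (hjκ : ∀ h, j (κ h) = 1)
    (hπι : ∀ g, π (ι g) = 1)
    (heqι : ∀ g e, ι (aG g (j e)) = e⁻¹ * ι g * e)
    (heqκ : ∀ h e, κ (aH h (π e)) = e⁻¹ * κ h * e)
    (δ : H₁ × G₁ → E) (hδ : ∀ p, δ p = κ p.1 * ι p.2)
    (act : H₁ × G₁ → E → H₁ × G₁)
    (hact : ∀ p e, act p e = (aH p.1 (π e), aG p.2 (j e))) :
    (∀ p q : H₁ × G₁, δ (p * q) = δ p * δ q) ∧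
    (∀ (e : E) (p q : H₁ × G₁), act (p * q) e = act p e * act q e) ∧
    (∀ p : H₁ × G₁, act p 1 = p) ∧
    (∀ (p : H₁ × G₁) (e e' : E), act p (e * e') = act (act p e) e') ∧
    (∀ (p : H₁ × G₁) (e : E), δ (act p e) = e⁻¹ * δ p * e) ∧
    (∀ p q : H₁ × G₁, act p (δ q) = q⁻¹ * p * q) := by
  have hcomm : ∀ h g, Commute (κ h) (ι g) := fun h =>
    commute_of_map_eq_one_of_conj_equivariant aG haG1 ι j heqι (hjκ h)
  have hδ_eq : δ = κ.noncommCoprod ι hcomm := funext hδ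
  have hπδ : ∀ q, π (δ q) = δH q.1 := by simp [hδ, hπκ, hπι]
  have hjδ : ∀ q, j (δ q) = δG q.2 := by simp [hδ, hjκ, hjι]
  refine ⟨?_, ?_, ?_, ?_, ?_, ?_⟩
  · rw [hδ_eq]
    exact map_mul _
  · intro e p q
    simp only [hact, Prod.fst_mul, Prod.snd_mul, haHhom, haGhom, Prod.mk_mul_mk]
  · intro p
    simp only [hact, map_one, haH1, haG1]
  · intro p e e'
    simp only [hact, map_mul, haHmul, haGmul]
  · intro p e
    rw [hact, hδ, hδ, heqκ, heqι]
    group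
  · intro p q
    rw [hact, hπδ, hjδ, hpfH, hpfG]
    rfl

theorem butterfly_diagonal_crossed_module
    {H₁ H₀ G₁ G₀ : Type*} [Group H₁] [Group H₀] [Group G₁] [Group G₀]
    (δH : H₁ →* H₀) (aH : H₁ → H₀ → H₁)
    (haH1 : ∀ h, aH h 1 = h)
    (haHmul : ∀ h x y, aH h (x * y) = aH (aH h x) y)
    (haHhom : ∀ h h' x, aH (h * h') x = aH h x * aH h' x)
    (hδH : ∀ h x, δH (aH h x) = x⁻¹ * δH h * x)
    (hpfH : ∀ h₀ h₁, aH h₀ (δH h₁) = h₁⁻¹ * h₀ * h₁)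
    (δG : G₁ →* G₀) (aG : G₁ → G₀ → G₁)
    (haG1 : ∀ g, aG g 1 = g)
    (haGmul : ∀ g x y, aG g (x * y) = aG (aG g x) y)
    (haGhom : ∀ g g' x, aG (g * g') x = aG g x * aG g' x)
    (hδG : ∀ g x, δG (aG g x) = x⁻¹ * δG g * x)
    (hpfG : ∀ g₀ g₁, aG g₀ (δG g₁) = g₁⁻¹ * g₀ * g₁)
    {E : Type*} [Group E]
    (κ : H₁ →* E) (ι : G₁ →* E) (π : E →* H₀) (j : E →* G₀)
    (hπκ : ∀ h, π (κ h) = δH h)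
    (hjι : ∀ g, j (ι g) = δG g)
    (hjκ : ∀ h, j (κ h) = 1)
    (hπι : ∀ g, π (ι g) = 1)
    (hιinj : Function.Injective ι)
    (hkerπ : ∀ e, π e = 1 → ∃ g, e = ι g)
    (hπsurj : Function.Surjective π)
    (heqι : ∀ g e, ι (aG g (j e)) = e⁻¹ * ι g * e)
    (heqκ : ∀ h e, κ (aH h (π e)) = e⁻¹ * κ h * e)
    (δ : H₁ × G₁ → E) (hδ : ∀ p, δ p = κ p.1 * ι p.2)
    (act : H₁ × G₁ → E → H₁ × G₁)
    (hact : ∀ p e, act p e = (aH p.1 (π e), aG p.2 (j e))) :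
    (∀ p q : H₁ × G₁, δ (p * q) = δ p * δ q) ∧
    (∀ (e : E) (p q : H₁ × G₁), act (p * q) e = act p e * act q e) ∧
    (∀ p : H₁ × G₁, act p 1 = p) ∧
    (∀ (p : H₁ × G₁) (e e' : E), act p (e * e') = act (act p e) e') ∧
    (∀ (p : H₁ × G₁) (e : E), δ (act p e) = e⁻¹ * δ p * e) ∧
    (∀ p q : H₁ × G₁, act p (δ q) = q⁻¹ * p * q) :=
  butterfly_diagonal_crossed_module_general δH aH haH1 haHmul haHhom hpfH δG aG haG1 haGmul haGhom
    hpfG κ ι π j hπκ hjι hjκ hπι heqι heqκ δ hδ act hact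
end

section
/- Let [H•, E, G•] be a butterfly. For every h ∈ ker ∂_H there is a unique g ∈ G₁ with κ(h) = ι(g), and this g lies in ker ∂_G. The resulting map π₁(E): ker ∂_H → ker ∂_G, h ↦ g, is a group homomorphism. -/
theorem MonoidHom.map_mem_range_of_comp_eq_of_ker_le_range
    {H₁ H₀ G₁ E : Type*} [MulOneClass H₁] [MulOneClass H₀] [MulOneClass G₁] [MulOneClass E]
    {δH : H₁ →* H₀} {κ : H₁ →* E} {ι : G₁ →* E} {π : E →* H₀}
    (hπκ : ∀ h, π (κ h) = δH h) (hkerπ : ∀ e, π e = 1 → ∃ g, e = ι g)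
    {h : H₁} (hh : δH h = 1) :
    κ h ∈ Set.range ι :=
  let ⟨g, hg⟩ := hkerπ (κ h) (by rw [hπκ, hh])
  ⟨g, hg.symm⟩

theorem MonoidHom.map_mul_of_injective_of_comp_eqOn
    {M N P : Type*} [MulOneClass M] [MulOneClass N] [MulOneClass P]
    {κ : M →* P} {ι : N →* P} (hι : Function.Injective ι) {S : Submonoid M} {f : M → N}
    (hf : ∀ h ∈ S, κ h = ι (f h)) {h h' : M} (hh : h ∈ S) (hh' : h' ∈ S) :
    f (h * h') = f h * f h' :=
  hι <| by rw [← hf _ (S.mul_mem hh hh'), map_mul, map_mul, hf h hh, hf h' hh']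

theorem butterfly_pi_one_general
    {H₁ H₀ G₁ G₀ : Type*} [Group H₁] [Group H₀] [Group G₁] [Group G₀]
    (δH : H₁ →* H₀)
    (δG : G₁ →* G₀)
    {E : Type*} [Group E]
    (κ : H₁ →* E) (ι : G₁ →* E) (π : E →* H₀) (j : E →* G₀)
    (hπκ : ∀ h, π (κ h) = δH h)
    (hjι : ∀ g, j (ι g) = δG g)
    (hjκ : ∀ h, j (κ h) = 1)
    (hιinj : Function.Injective ι)
    (hkerπ : ∀ e, π e = 1 → ∃ g, e = ι g) :
    (∀ h : H₁, δH h = 1 → ∃! g : G₁, κ h = ι g) ∧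
    (∀ f : H₁ → G₁, (∀ h, δH h = 1 → κ h = ι (f h)) →
      (∀ h, δH h = 1 → δG (f h) = 1) ∧
      (∀ h h', δH h = 1 → δH h' = 1 → f (h * h') = f h * f h')) := by
  refine ⟨fun h hh => ?_, fun f hf => ⟨fun h hh => ?_, fun h h' hh hh' => ?_⟩⟩
  · have hmem := MonoidHom.map_mem_range_of_comp_eq_of_ker_le_range hπκ hkerπ hh
    simpa only [eq_comm] using hιinj.existsUnique_of_mem_range hmem
  · rw [← hjι, ← hf h hh, hjκ]
  · exact MonoidHom.map_mul_of_injective_of_comp_eqOn hιinj (S := MonoidHom.mker δH) hf hh hh'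

theorem butterfly_pi_one
    {H₁ H₀ G₁ G₀ : Type*} [Group H₁] [Group H₀] [Group G₁] [Group G₀]
    (δH : H₁ →* H₀) (aH : H₁ → H₀ → H₁)
    (haH1 : ∀ h, aH h 1 = h)
    (haHmul : ∀ h x y, aH h (x * y) = aH (aH h x) y)
    (haHhom : ∀ h h' x, aH (h * h') x = aH h x * aH h' x)
    (hδH : ∀ h x, δH (aH h x) = x⁻¹ * δH h * x)
    (hpfH : ∀ h₀ h₁, aH h₀ (δH h₁) = h₁⁻¹ * h₀ * h₁)
    (δG : G₁ →* G₀) (aG : G₁ → G₀ → G₁)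
    (haG1 : ∀ g, aG g 1 = g)
    (haGmul : ∀ g x y, aG g (x * y) = aG (aG g x) y)
    (haGhom : ∀ g g' x, aG (g * g') x = aG g x * aG g' x)
    (hδG : ∀ g x, δG (aG g x) = x⁻¹ * δG g * x)
    (hpfG : ∀ g₀ g₁, aG g₀ (δG g₁) = g₁⁻¹ * g₀ * g₁)
    {E : Type*} [Group E]
    (κ : H₁ →* E) (ι : G₁ →* E) (π : E →* H₀) (j : E →* G₀)
    (hπκ : ∀ h, π (κ h) = δH h)
    (hjι : ∀ g, j (ι g) = δG g)
    (hjκ : ∀ h, j (κ h) = 1)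
    (hπι : ∀ g, π (ι g) = 1)
    (hιinj : Function.Injective ι)
    (hkerπ : ∀ e, π e = 1 → ∃ g, e = ι g)
    (hπsurj : Function.Surjective π)
    (heqι : ∀ g e, ι (aG g (j e)) = e⁻¹ * ι g * e)
    (heqκ : ∀ h e, κ (aH h (π e)) = e⁻¹ * κ h * e) :
    (∀ h : H₁, δH h = 1 → ∃! g : G₁, κ h = ι g) ∧
    (∀ f : H₁ → G₁, (∀ h, δH h = 1 → κ h = ι (f h)) →
      (∀ h, δH h = 1 → δG (f h) = 1) ∧
      (∀ h h', δH h = 1 → δH h' = 1 → f (h * h') = f h * f h')) :=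
  butterfly_pi_one_general δH δG κ ι π j hπκ hjι hjκ hιinj hkerπ
end

section
/- Let [H•, E, G•] be a butterfly. Then there is a well-defined group homomorphism π₀(E): H₀/∂_H(H₁) → G₀/∂_G(G₁) determined by: for x ∈ H₀, choose any e ∈ E with π(e) = x, and send the class of x to the class of j(e). (In particular this value is independent of the chosen lift e and of the representative x of the class.) -/
/-!
An element `e` with `π e` in the normal closure of `∂_H(H₁) = π(κ(H₁))` agrees, modulo
`ker π = ι(G₁)`, with an element of the normal closure of `κ(H₁)`; the latter is killed by `j`,
and `j` maps `ι(G₁)` onto `∂_G(G₁)`. Hence `e ↦ [j e]` vanishes on the kernel of the surjection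
`e ↦ [π e]` and factors uniquely through it.
-/

open Subgroup

theorem MonoidHom.existsUnique_factor_of_surjective {G₁ G₂ G₃ : Type*} [Group G₁] [Group G₂]
    [Group G₃] {f : G₁ →* G₂} (hf : Function.Surjective f) {g : G₁ →* G₃}
    (hker : f.ker ≤ g.ker) : ∃! φ : G₂ →* G₃, ∀ x, φ (f x) = g x :=
  ⟨f.liftOfSurjective hf ⟨g, hker⟩, f.liftOfRightInverse_comp_apply _ _ _,
    fun φ hφ ↦ f.eq_liftOfRightInverse _ _ g hker φ (MonoidHom.ext hφ)⟩

theorem Subgroup.normalClosure_range_eq_map_normalClosure_range {H₁ H₀ E : Type*} [Group H₁]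
    [Group H₀] [Group E] {δ : H₁ →* H₀} {κ : H₁ →* E} {π : E →* H₀} (hπκ : ∀ h, π (κ h) = δ h)
    (hπ : Function.Surjective π) :
    normalClosure (Set.range δ) = (normalClosure (Set.range κ)).map π := by
  rw [map_normalClosure _ _ hπ, ← Set.range_comp]
  congr
  exact funext fun h ↦ (hπκ h).symm

theorem butterfly_ker_le_ker {H₁ H₀ G₁ G₀ E : Type*} [Group H₁] [Group H₀] [Group G₁] [Group G₀]
    [Group E] {δH : H₁ →* H₀} {δG : G₁ →* G₀} {κ : H₁ →* E} {ι : G₁ →* E} {π : E →* H₀}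
    {j : E →* G₀} (hπκ : ∀ h, π (κ h) = δH h) (hjι : ∀ g, j (ι g) = δG g)
    (hjκ : ∀ h, j (κ h) = 1) (hkerπ : ∀ e, π e = 1 → ∃ g, e = ι g)
    (hπsurj : Function.Surjective π) :
    ((QuotientGroup.mk' (normalClosure (Set.range δH))).comp π).ker ≤
      ((QuotientGroup.mk' (normalClosure (Set.range δG))).comp j).ker := by
  intro e he
  rw [MonoidHom.mem_ker, MonoidHom.comp_apply, QuotientGroup.mk'_apply,
    QuotientGroup.eq_one_iff, normalClosure_range_eq_map_normalClosure_range hπκ hπsurj] at he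
  obtain ⟨k, hk, hke⟩ := he
  have hjk : j k = 1 :=
    normalClosure_le_normal (N := j.ker) (by rintro _ ⟨h, rfl⟩; exact hjκ h) hk
  obtain ⟨g, hg⟩ := hkerπ (k⁻¹ * e) (by rw [map_mul, map_inv, hke, inv_mul_cancel])
  have he : e = k * ι g := by rw [← hg, mul_inv_cancel_left]
  rw [MonoidHom.mem_ker, MonoidHom.comp_apply, QuotientGroup.mk'_apply, QuotientGroup.eq_one_iff,
    he, map_mul, hjk, one_mul, hjι]
  exact subset_normalClosure ⟨g, rfl⟩

theorem butterfly_pi_zero_general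
    {H₁ H₀ G₁ G₀ : Type*} [Group H₁] [Group H₀] [Group G₁] [Group G₀]
    (δH : H₁ →* H₀)
    (δG : G₁ →* G₀)
    {E : Type*} [Group E]
    (κ : H₁ →* E) (ι : G₁ →* E) (π : E →* H₀) (j : E →* G₀)
    (hπκ : ∀ h, π (κ h) = δH h)
    (hjι : ∀ g, j (ι g) = δG g)
    (hjκ : ∀ h, j (κ h) = 1)
    (hkerπ : ∀ e, π e = 1 → ∃ g, e = ι g)
    (hπsurj : Function.Surjective π) :
    ∃! Φ : H₀ ⧸ Subgroup.normalClosure (Set.range δH) →*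
           G₀ ⧸ Subgroup.normalClosure (Set.range δG),
      ∀ e : E, Φ (QuotientGroup.mk (π e)) = QuotientGroup.mk (j e) :=
  MonoidHom.existsUnique_factor_of_surjective (f := (QuotientGroup.mk' _).comp π)
    (g := (QuotientGroup.mk' _).comp j) ((QuotientGroup.mk'_surjective _).comp hπsurj)
    (butterfly_ker_le_ker hπκ hjι hjκ hkerπ hπsurj)

theorem butterfly_pi_zero
    {H₁ H₀ G₁ G₀ : Type*} [Group H₁] [Group H₀] [Group G₁] [Group G₀]
    (δH : H₁ →* H₀) (aH : H₁ → H₀ → H₁)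
    (haH1 : ∀ h, aH h 1 = h)
    (haHmul : ∀ h x y, aH h (x * y) = aH (aH h x) y)
    (haHhom : ∀ h h' x, aH (h * h') x = aH h x * aH h' x)
    (hδH : ∀ h x, δH (aH h x) = x⁻¹ * δH h * x)
    (hpfH : ∀ h₀ h₁, aH h₀ (δH h₁) = h₁⁻¹ * h₀ * h₁)
    (δG : G₁ →* G₀) (aG : G₁ → G₀ → G₁)
    (haG1 : ∀ g, aG g 1 = g)
    (haGmul : ∀ g x y, aG g (x * y) = aG (aG g x) y)
    (haGhom : ∀ g g' x, aG (g * g') x = aG g x * aG g' x)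
    (hδG : ∀ g x, δG (aG g x) = x⁻¹ * δG g * x)
    (hpfG : ∀ g₀ g₁, aG g₀ (δG g₁) = g₁⁻¹ * g₀ * g₁)
    {E : Type*} [Group E]
    (κ : H₁ →* E) (ι : G₁ →* E) (π : E →* H₀) (j : E →* G₀)
    (hπκ : ∀ h, π (κ h) = δH h)
    (hjι : ∀ g, j (ι g) = δG g)
    (hjκ : ∀ h, j (κ h) = 1)
    (hπι : ∀ g, π (ι g) = 1)
    (hιinj : Function.Injective ι)
    (hkerπ : ∀ e, π e = 1 → ∃ g, e = ι g)
    (hπsurj : Function.Surjective π)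
    (heqι : ∀ g e, ι (aG g (j e)) = e⁻¹ * ι g * e)
    (heqκ : ∀ h e, κ (aH h (π e)) = e⁻¹ * κ h * e) :
    ∃! Φ : H₀ ⧸ Subgroup.normalClosure (Set.range δH) →*
           G₀ ⧸ Subgroup.normalClosure (Set.range δG),
      ∀ e : E, Φ (QuotientGroup.mk (π e)) = QuotientGroup.mk (j e) :=
  butterfly_pi_zero_general δH δG κ ι π j hπκ hjι hjκ hkerπ hπsurj
end

section
/- Let [H•, E, G•] be a butterfly, and let δ: H₁ × G₁ → E, δ(h,g) = κ(h)ι(g), be the associated crossed module. Then the strict projection (pr₁, π): (H₁ × G₁ → E) → (H₁ → H₀) is a quasi-isomorphism: the first projection restricts to an isomorphism ker δ ≅ ker ∂_H, and π induces an isomorphism E/δ(H₁ × G₁) ≅ H₀/∂_H(H₁). -/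
/-!
Write `S = {κ h * ι g}` and `M` for its normal closure in `E`. Since `π (κ h * ι g) = ∂_H h`,
an element of `S` is a cycle exactly when `∂_H h = 1`, and then `κ h ∈ ker π = im ι` determines the
`G₁`-component through the injectivity of `ι`. On the other side, `M` contains `ker π = im ι`, so by
surjectivity of `π` it is the full preimage of `π(M)`, which is the normal closure of `π(S) = im ∂_H`;
hence `π` induces an isomorphism `E ⧸ M ≃* H₀ ⧸ normalClosure (im ∂_H)`.
-/

open Subgroup

theorem QuotientGroup.existsUnique_bijective_map_of_comap_eq {G H : Type*} [Group G] [Group H]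
    {f : G →* H} (hf : Function.Surjective f) {M : Subgroup G} [M.Normal] {N : Subgroup H}
    [N.Normal] (hMN : N.comap f = M) :
    ∃! Φ : G ⧸ M →* H ⧸ N, (∀ g : G, Φ g = f g) ∧ Function.Bijective Φ := by
  have hker : M = ((mk' N).comp f).ker := by
    rw [← MonoidHom.comap_ker, ker_mk', hMN]
  refine ⟨liftEquiv M (φ := (mk' N).comp f) ((mk'_surjective N).comp hf) hker,
    ⟨fun _ => rfl, MulEquiv.bijective _⟩, fun Ψ hΨ => ?_⟩
  ext g
  exact hΨ.1 g

section Butterfly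

variable {H₁ H₀ G₁ E : Type*} [Group H₁] [Group H₀] [Group G₁] [Group E]
  {δH : H₁ →* H₀} {κ : H₁ →* E} {ι : G₁ →* E} {π : E →* H₀}

theorem image_range_mul_eq_range (hπκ : ∀ h, π (κ h) = δH h) (hπι : ∀ g, π (ι g) = 1) :
    π '' Set.range (fun p : H₁ × G₁ => κ p.1 * ι p.2) = Set.range δH := by
  rw [← Set.range_comp]
  ext x
  simp only [Set.mem_range, Function.comp_apply, map_mul, hπκ, hπι, mul_one, Prod.exists]
  exact ⟨fun ⟨h, _, hx⟩ => ⟨h, hx⟩, fun ⟨h, hx⟩ => ⟨h, 1, hx⟩⟩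

theorem ker_le_normalClosure_range_mul (hkerπ : ∀ e, π e = 1 → ∃ g, e = ι g) :
    π.ker ≤ normalClosure (Set.range fun p : H₁ × G₁ => κ p.1 * ι p.2) := by
  intro e he
  obtain ⟨g, rfl⟩ := hkerπ e he
  exact subset_normalClosure ⟨(1, g), by simp⟩

theorem comap_normalClosure_range_eq (hπκ : ∀ h, π (κ h) = δH h) (hπι : ∀ g, π (ι g) = 1)
    (hkerπ : ∀ e, π e = 1 → ∃ g, e = ι g) (hπsurj : Function.Surjective π) :
    (normalClosure (Set.range δH)).comap π =
      normalClosure (Set.range fun p : H₁ × G₁ => κ p.1 * ι p.2) := by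
  rw [← image_range_mul_eq_range hπκ hπι, ← map_normalClosure _ _ hπsurj]
  exact comap_map_eq_self (ker_le_normalClosure_range_mul hkerπ)

theorem existsUnique_mul_eq_one_of_map_eq_one (hπκ : ∀ h, π (κ h) = δH h)
    (hιinj : Function.Injective ι) (hkerπ : ∀ e, π e = 1 → ∃ g, e = ι g)
    {h : H₁} (hh : δH h = 1) :
    ∃! p : H₁ × G₁, κ p.1 * ι p.2 = 1 ∧ p.1 = h := by
  obtain ⟨g, hg⟩ := hkerπ (κ h) (by rw [hπκ, hh])
  refine ⟨(h, g⁻¹), ⟨by simp [hg], rfl⟩, ?_⟩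
  rintro ⟨_, g'⟩ ⟨hq, rfl⟩
  have hg' : ι g' = ι g⁻¹ := by
    rw [map_inv, ← hg]
    exact eq_inv_of_mul_eq_one_right hq
  rw [hιinj hg']

end Butterfly

theorem butterfly_projection_quasi_isomorphism_general
    {H₁ H₀ G₁ : Type*} [Group H₁] [Group H₀] [Group G₁]
    (δH : H₁ →* H₀)
    {E : Type*} [Group E]
    (κ : H₁ →* E) (ι : G₁ →* E) (π : E →* H₀)
    (hπκ : ∀ h, π (κ h) = δH h)
    (hπι : ∀ g, π (ι g) = 1)
    (hιinj : Function.Injective ι)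
    (hkerπ : ∀ e, π e = 1 → ∃ g, e = ι g)
    (hπsurj : Function.Surjective π) :
    (∀ p : H₁ × G₁, κ p.1 * ι p.2 = 1 → δH p.1 = 1) ∧
    (∀ h : H₁, δH h = 1 → ∃! p : H₁ × G₁, κ p.1 * ι p.2 = 1 ∧ p.1 = h) ∧
    (∃! Φ : E ⧸ Subgroup.normalClosure (Set.range fun p : H₁ × G₁ => κ p.1 * ι p.2) →*
            H₀ ⧸ Subgroup.normalClosure (Set.range δH),
      (∀ e : E, Φ (QuotientGroup.mk e) = QuotientGroup.mk (π e)) ∧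
      Function.Bijective Φ) := by
  refine ⟨fun p hp => ?_, fun h => existsUnique_mul_eq_one_of_map_eq_one hπκ hιinj hkerπ,
    QuotientGroup.existsUnique_bijective_map_of_comap_eq hπsurj
      (comap_normalClosure_range_eq hπκ hπι hkerπ hπsurj)⟩
  simpa [hπκ, hπι] using congrArg π hp

theorem butterfly_projection_quasi_isomorphism
    {H₁ H₀ G₁ G₀ : Type*} [Group H₁] [Group H₀] [Group G₁] [Group G₀]
    (δH : H₁ →* H₀) (aH : H₁ → H₀ → H₁)
    (haH1 : ∀ h, aH h 1 = h)
    (haHmul : ∀ h x y, aH h (x * y) = aH (aH h x) y)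
    (haHhom : ∀ h h' x, aH (h * h') x = aH h x * aH h' x)
    (hδH : ∀ h x, δH (aH h x) = x⁻¹ * δH h * x)
    (hpfH : ∀ h₀ h₁, aH h₀ (δH h₁) = h₁⁻¹ * h₀ * h₁)
    (δG : G₁ →* G₀) (aG : G₁ → G₀ → G₁)
    (haG1 : ∀ g, aG g 1 = g)
    (haGmul : ∀ g x y, aG g (x * y) = aG (aG g x) y)
    (haGhom : ∀ g g' x, aG (g * g') x = aG g x * aG g' x)
    (hδG : ∀ g x, δG (aG g x) = x⁻¹ * δG g * x)
    (hpfG : ∀ g₀ g₁, aG g₀ (δG g₁) = g₁⁻¹ * g₀ * g₁)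
    {E : Type*} [Group E]
    (κ : H₁ →* E) (ι : G₁ →* E) (π : E →* H₀) (j : E →* G₀)
    (hπκ : ∀ h, π (κ h) = δH h)
    (hjι : ∀ g, j (ι g) = δG g)
    (hjκ : ∀ h, j (κ h) = 1)
    (hπι : ∀ g, π (ι g) = 1)
    (hιinj : Function.Injective ι)
    (hkerπ : ∀ e, π e = 1 → ∃ g, e = ι g)
    (hπsurj : Function.Surjective π)
    (heqι : ∀ g e, ι (aG g (j e)) = e⁻¹ * ι g * e)
    (heqκ : ∀ h e, κ (aH h (π e)) = e⁻¹ * κ h * e) :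
    (∀ p : H₁ × G₁, κ p.1 * ι p.2 = 1 → δH p.1 = 1) ∧
    (∀ h : H₁, δH h = 1 → ∃! p : H₁ × G₁, κ p.1 * ι p.2 = 1 ∧ p.1 = h) ∧
    (∃! Φ : E ⧸ Subgroup.normalClosure (Set.range fun p : H₁ × G₁ => κ p.1 * ι p.2) →*
            H₀ ⧸ Subgroup.normalClosure (Set.range δH),
      (∀ e : E, Φ (QuotientGroup.mk e) = QuotientGroup.mk (π e)) ∧
      Function.Bijective Φ) :=
  butterfly_projection_quasi_isomorphism_general δH κ ι π hπκ hπι hιinj hkerπ hπsurj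
end

section
/- Let [H•, E, G•] be a flippable (reversible) butterfly, i.e. in addition κ is injective, ker j = im κ, and j is surjective. Then the induced homomorphism π₀(E): H₀/∂_H(H₁) → G₀/∂_G(G₁) (sending the class of π(e) to the class of j(e)) is a group isomorphism, and the induced homomorphism π₁(E): ker ∂_H → ker ∂_G (defined by κ(h) = ι(π₁(E)(h))) is a group isomorphism. -/
/-!
When the NE–SW diagonal `G₁ ↪ E ↠ H₀` is an extension, `j` descends along `π` to `π₀(E)` on
cokernels (as `j ∘ ι = δG` and `j ∘ κ = 1`), and `κ h` with `δH h = 1` lies in `ker π = im ι`,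
which gives `π₁(E)`. Flippability says that the mirror image of the diagram, exchanging
`(κ, π)` with `(ι, j)`, has the same property; the maps it induces invert `π₀(E)` and `π₁(E)`.
-/

open Subgroup QuotientGroup

/-- A commutative butterfly diagram whose NE–SW diagonal `G₁ → E → H₀` is a group extension. -/
structure IsButterflyDiagram {H₁ H₀ G₁ G₀ E : Type*} [Group H₁] [Group H₀] [Group G₁] [Group G₀]
    [Group E] (δH : H₁ →* H₀) (δG : G₁ →* G₀) (κ : H₁ →* E) (ι : G₁ →* E) (π : E →* H₀)
    (j : E →* G₀) : Prop where
  π_κ : ∀ h, π (κ h) = δH h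
  j_ι : ∀ g, j (ι g) = δG g
  j_κ : ∀ h, j (κ h) = 1
  ι_injective : Function.Injective ι
  ker_π : ∀ e, π e = 1 → ∃ g, e = ι g
  π_surjective : Function.Surjective π

namespace IsButterflyDiagram

variable {H₁ H₀ G₁ G₀ E : Type*} [Group H₁] [Group H₀] [Group G₁] [Group G₀] [Group E]
  {δH : H₁ →* H₀} {δG : G₁ →* G₀} {κ : H₁ →* E} {ι : G₁ →* E} {π : E →* H₀} {j : E →* G₀}

theorem ker_π_le (B : IsButterflyDiagram δH δG κ ι π j) :
    π.ker ≤ ((mk' (normalClosure (Set.range δG))).comp j).ker := by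
  intro e he
  obtain ⟨g, rfl⟩ := B.ker_π e he
  rw [MonoidHom.mem_ker, MonoidHom.comp_apply, B.j_ι, mk'_apply, eq_one_iff]
  exact subset_normalClosure ⟨g, rfl⟩

noncomputable def liftCoker (B : IsButterflyDiagram δH δG κ ι π j) :
    H₀ →* G₀ ⧸ normalClosure (Set.range δG) :=
  π.liftOfSurjective B.π_surjective ⟨_, B.ker_π_le⟩

theorem liftCoker_apply (B : IsButterflyDiagram δH δG κ ι π j) (e : E) :
    B.liftCoker (π e) = j e :=
  π.liftOfRightInverse_comp_apply _ _ ⟨_, B.ker_π_le⟩ e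

theorem normalClosure_le_ker_liftCoker (B : IsButterflyDiagram δH δG κ ι π j) :
    normalClosure (Set.range δH) ≤ B.liftCoker.ker := by
  refine normalClosure_le_normal ?_
  rintro _ ⟨h, rfl⟩
  rw [SetLike.mem_coe, MonoidHom.mem_ker, ← B.π_κ, liftCoker_apply, B.j_κ, QuotientGroup.mk_one]

/-- The map `π₀(E)` induced on cokernels. -/
noncomputable def cokerMap (B : IsButterflyDiagram δH δG κ ι π j) :
    H₀ ⧸ normalClosure (Set.range δH) →* G₀ ⧸ normalClosure (Set.range δG) :=
  lift _ B.liftCoker B.normalClosure_le_ker_liftCoker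

theorem cokerMap_mk (B : IsButterflyDiagram δH δG κ ι π j) (e : E) :
    B.cokerMap (π e) = j e :=
  B.liftCoker_apply e

theorem cokerMap_unique (B : IsButterflyDiagram δH δG κ ι π j)
    {Φ : H₀ ⧸ normalClosure (Set.range δH) →* G₀ ⧸ normalClosure (Set.range δG)}
    (hΦ : ∀ e, Φ (π e) = j e) : Φ = B.cokerMap := by
  refine monoidHom_ext _ (MonoidHom.ext fun x => ?_)
  obtain ⟨e, rfl⟩ := B.π_surjective x
  simp only [MonoidHom.comp_apply, mk'_apply, hΦ, cokerMap_mk]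

theorem cokerMap_flip_comp (B : IsButterflyDiagram δH δG κ ι π j)
    (B' : IsButterflyDiagram δG δH ι κ j π) (x : H₀ ⧸ normalClosure (Set.range δH)) :
    B'.cokerMap (B.cokerMap x) = x := by
  obtain ⟨x, rfl⟩ := mk_surjective x
  obtain ⟨e, rfl⟩ := B.π_surjective x
  rw [cokerMap_mk, cokerMap_mk]

theorem cokerMap_bijective (B : IsButterflyDiagram δH δG κ ι π j)
    (B' : IsButterflyDiagram δG δH ι κ j π) : Function.Bijective B.cokerMap :=
  Function.bijective_iff_has_inverse.2
    ⟨B'.cokerMap, B.cokerMap_flip_comp B', B'.cokerMap_flip_comp B⟩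

/-- The map `π₁(E)` on kernels, as a relation. -/
theorem existsUnique_ker (B : IsButterflyDiagram δH δG κ ι π j) (h : H₁) (hh : δH h = 1) :
    ∃! g : G₁, δG g = 1 ∧ κ h = ι g := by
  obtain ⟨g, hg⟩ := B.ker_π (κ h) (by rw [B.π_κ, hh])
  refine ⟨g, ⟨?_, hg⟩, fun g' hg' => B.ι_injective (hg'.2.symm.trans hg)⟩
  rw [← B.j_ι, ← hg, B.j_κ]

end IsButterflyDiagram

theorem flippable_butterfly_equivalence_general
    {H₁ H₀ G₁ G₀ : Type*} [Group H₁] [Group H₀] [Group G₁] [Group G₀]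
    (δH : H₁ →* H₀)
    (δG : G₁ →* G₀)
    {E : Type*} [Group E]
    (κ : H₁ →* E) (ι : G₁ →* E) (π : E →* H₀) (j : E →* G₀)
    (hπκ : ∀ h, π (κ h) = δH h)
    (hjι : ∀ g, j (ι g) = δG g)
    (hjκ : ∀ h, j (κ h) = 1)
    (hπι : ∀ g, π (ι g) = 1)
    (hιinj : Function.Injective ι)
    (hkerπ : ∀ e, π e = 1 → ∃ g, e = ι g)
    (hπsurj : Function.Surjective π)
    (hκinj : Function.Injective κ)
    (hkerj : ∀ e, j e = 1 → ∃ h, e = κ h)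
    (hjsurj : Function.Surjective j) :
    (∃! Φ : H₀ ⧸ Subgroup.normalClosure (Set.range δH) →*
            G₀ ⧸ Subgroup.normalClosure (Set.range δG),
      (∀ e : E, Φ (QuotientGroup.mk (π e)) = QuotientGroup.mk (j e)) ∧
      Function.Bijective Φ) ∧
    (∀ h : H₁, δH h = 1 → ∃! g : G₁, δG g = 1 ∧ κ h = ι g) ∧
    (∀ g : G₁, δG g = 1 → ∃! h : H₁, δH h = 1 ∧ κ h = ι g) := by
  have B : IsButterflyDiagram δH δG κ ι π j := ⟨hπκ, hjι, hjκ, hιinj, hkerπ, hπsurj⟩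
  have B' : IsButterflyDiagram δG δH ι κ j π := ⟨hjι, hπκ, hπι, hκinj, hkerj, hjsurj⟩
  refine ⟨⟨B.cokerMap, ⟨B.cokerMap_mk, B.cokerMap_bijective B'⟩,
    fun Φ hΦ => B.cokerMap_unique hΦ.1⟩, B.existsUnique_ker, fun g hg => ?_⟩
  exact (existsUnique_congr fun h => and_congr_right' eq_comm).1 (B'.existsUnique_ker g hg)

theorem flippable_butterfly_equivalence
    {H₁ H₀ G₁ G₀ : Type*} [Group H₁] [Group H₀] [Group G₁] [Group G₀]
    (δH : H₁ →* H₀) (aH : H₁ → H₀ → H₁)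
    (haH1 : ∀ h, aH h 1 = h)
    (haHmul : ∀ h x y, aH h (x * y) = aH (aH h x) y)
    (haHhom : ∀ h h' x, aH (h * h') x = aH h x * aH h' x)
    (hδH : ∀ h x, δH (aH h x) = x⁻¹ * δH h * x)
    (hpfH : ∀ h₀ h₁, aH h₀ (δH h₁) = h₁⁻¹ * h₀ * h₁)
    (δG : G₁ →* G₀) (aG : G₁ → G₀ → G₁)
    (haG1 : ∀ g, aG g 1 = g)
    (haGmul : ∀ g x y, aG g (x * y) = aG (aG g x) y)
    (haGhom : ∀ g g' x, aG (g * g') x = aG g x * aG g' x)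
    (hδG : ∀ g x, δG (aG g x) = x⁻¹ * δG g * x)
    (hpfG : ∀ g₀ g₁, aG g₀ (δG g₁) = g₁⁻¹ * g₀ * g₁)
    {E : Type*} [Group E]
    (κ : H₁ →* E) (ι : G₁ →* E) (π : E →* H₀) (j : E →* G₀)
    (hπκ : ∀ h, π (κ h) = δH h)
    (hjι : ∀ g, j (ι g) = δG g)
    (hjκ : ∀ h, j (κ h) = 1)
    (hπι : ∀ g, π (ι g) = 1)
    (hιinj : Function.Injective ι)
    (hkerπ : ∀ e, π e = 1 → ∃ g, e = ι g)
    (hπsurj : Function.Surjective π)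
    (heqι : ∀ g e, ι (aG g (j e)) = e⁻¹ * ι g * e)
    (heqκ : ∀ h e, κ (aH h (π e)) = e⁻¹ * κ h * e)
    (hκinj : Function.Injective κ)
    (hkerj : ∀ e, j e = 1 → ∃ h, e = κ h)
    (hjsurj : Function.Surjective j) :
    (∃! Φ : H₀ ⧸ Subgroup.normalClosure (Set.range δH) →*
            G₀ ⧸ Subgroup.normalClosure (Set.range δG),
      (∀ e : E, Φ (QuotientGroup.mk (π e)) = QuotientGroup.mk (j e)) ∧
      Function.Bijective Φ) ∧
    (∀ h : H₁, δH h = 1 → ∃! g : G₁, δG g = 1 ∧ κ h = ι g) ∧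
    (∀ g : G₁, δG g = 1 → ∃! h : H₁, δH h = 1 ∧ κ h = ι g) :=
  flippable_butterfly_equivalence_general δH δG κ ι π j hπκ hjι hjκ hπι hιinj hkerπ hπsurj hκinj
    hkerj hjsurj
end

section
/- Let [H•, E, G•] be a butterfly. Then κ(H₁) is a normal subgroup of ker j, and the following six-term sequence of groups is exact: 1 → ker κ → ker ∂_H → ker ∂_G → (ker j)/κ(H₁) → H₀/∂_H(H₁) → G₀/∂_G(G₁), where: the first map is the inclusion (using ∂_H = π∘κ); the second is π₁(E) defined by κ(h) = ι(π₁(E)(h)); the third sends g ∈ ker ∂_G to the class of ι(g) in (ker j)/κ(H₁); the fourth sends the class of e ∈ ker j to the class of π(e); and the fifth is π₀(E) sending the class of π(e) to the class of j(e). -/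
/-!
Every exactness claim is a diagram chase inside `E`. The butterfly identifies `G₁` with `ker π`
through `ι`, while `κ` lands in `ker j` and lifts `∂_H` along `π`; so an element of `E` whose image
in `H₀` is a boundary `∂_H h` differs from `κ h` by an element of `ι(G₁)`, and conversely.
Normality of `κ(H₁)` comes from the equivariance of `κ`.
-/

namespace Butterfly

variable {H₁ H₀ G₁ G₀ E : Type*} [Group H₁] [Group H₀] [Group G₁] [Group G₀] [Group E]
  {δH : H₁ →* H₀} {δG : G₁ →* G₀} {κ : H₁ →* E} {ι : G₁ →* E} {π : E →* H₀} {j : E →* G₀}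

theorem exists_conj_κ_eq {aH : H₁ → H₀ → H₁} (heqκ : ∀ h e, κ (aH h (π e)) = e⁻¹ * κ h * e)
    (e : E) (h : H₁) : ∃ h', e⁻¹ * κ h * e = κ h' :=
  ⟨aH h (π e), (heqκ h e).symm⟩

theorem δH_eq_one_of_κ_eq_one (hπκ : ∀ h, π (κ h) = δH h) {h : H₁} (hκ : κ h = 1) :
    δH h = 1 := by
  rw [← hπκ, hκ, map_one]

theorem π₁_eq_one_iff {π₁ : H₁ → G₁} (hιinj : Function.Injective ι)
    (hπ₁ : ∀ h, δH h = 1 → κ h = ι (π₁ h)) {h : H₁} (hδ : δH h = 1) :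
    π₁ h = 1 ↔ κ h = 1 := by
  rw [hπ₁ h hδ, ← map_one ι, hιinj.eq_iff]

theorem exists_π₁_eq_iff {π₁ : H₁ → G₁} (hπκ : ∀ h, π (κ h) = δH h) (hπι : ∀ g, π (ι g) = 1)
    (hιinj : Function.Injective ι) (hπ₁ : ∀ h, δH h = 1 → κ h = ι (π₁ h)) (g : G₁) :
    (∃ h, δH h = 1 ∧ π₁ h = g) ↔ ∃ h, ι g = κ h := by
  constructor
  · rintro ⟨h, hδ, rfl⟩
    exact ⟨h, (hπ₁ h hδ).symm⟩
  · rintro ⟨h, hιg⟩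
    have hδ : δH h = 1 := by rw [← hπκ, ← hιg, hπι]
    exact ⟨h, hδ, hιinj (by rw [← hπ₁ h hδ, hιg])⟩

theorem exists_ι_mul_κ_eq_iff (hπκ : ∀ h, π (κ h) = δH h) (hjι : ∀ g, j (ι g) = δG g)
    (hjκ : ∀ h, j (κ h) = 1) (hπι : ∀ g, π (ι g) = 1) (hkerπ : ∀ e, π e = 1 → ∃ g, e = ι g)
    {e : E} (hje : j e = 1) :
    (∃ g h, δG g = 1 ∧ e = ι g * κ h) ↔ π e ∈ δH.range := by
  constructor
  · rintro ⟨g, h, -, rfl⟩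
    exact ⟨h, by rw [map_mul, hπι, hπκ, one_mul]⟩
  · rintro ⟨h, hh⟩
    have hker : π (e * (κ h)⁻¹) = 1 := by rw [map_mul, map_inv, hπκ, hh, mul_inv_cancel]
    obtain ⟨g, hg⟩ := hkerπ _ hker
    refine ⟨g, h, ?_, ?_⟩
    · rw [← hjι, ← hg, map_mul, map_inv, hje, hjκ, one_mul, inv_one]
    · rw [← hg, inv_mul_cancel_right]

theorem exists_j_eq_one_iff (hπκ : ∀ h, π (κ h) = δH h) (hjι : ∀ g, j (ι g) = δG g)
    (hjκ : ∀ h, j (κ h) = 1) (hπι : ∀ g, π (ι g) = 1) (x : H₀) :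
    (∃ e, j e = 1 ∧ (π e)⁻¹ * x ∈ δH.range) ↔ ∃ e, π e = x ∧ j e ∈ δG.range := by
  constructor
  · rintro ⟨e, hje, h, hh⟩
    refine ⟨e * κ h, ?_, 1, ?_⟩
    · rw [map_mul, hπκ, hh, mul_inv_cancel_left]
    · rw [map_mul, hje, hjκ, one_mul, map_one]
  · rintro ⟨e, rfl, g, hg⟩
    refine ⟨e * (ι g)⁻¹, ?_, 1, ?_⟩
    · rw [map_mul, map_inv, hjι, hg, mul_inv_cancel]
    · rw [map_mul, map_inv, hπι, inv_one, mul_one, inv_mul_cancel, map_one]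

end Butterfly

theorem butterfly_six_term_exact_sequence_general
    {H₁ H₀ G₁ G₀ : Type*} [Group H₁] [Group H₀] [Group G₁] [Group G₀]
    (δH : H₁ →* H₀) (aH : H₁ → H₀ → H₁)
    (δG : G₁ →* G₀)
    {E : Type*} [Group E]
    (κ : H₁ →* E) (ι : G₁ →* E) (π : E →* H₀) (j : E →* G₀)
    (hπκ : ∀ h, π (κ h) = δH h)
    (hjι : ∀ g, j (ι g) = δG g)
    (hjκ : ∀ h, j (κ h) = 1)
    (hπι : ∀ g, π (ι g) = 1)
    (hιinj : Function.Injective ι)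
    (hkerπ : ∀ e, π e = 1 → ∃ g, e = ι g)
    (heqκ : ∀ h e, κ (aH h (π e)) = e⁻¹ * κ h * e)
    (π₁ : H₁ → G₁) (hπ₁ : ∀ h, δH h = 1 → κ h = ι (π₁ h)) :
    (∀ (e : E) (h : H₁), j e = 1 → ∃ h', e⁻¹ * κ h * e = κ h') ∧
    (∀ h : H₁, κ h = 1 → δH h = 1) ∧
    (∀ h : H₁, δH h = 1 → (π₁ h = 1 ↔ κ h = 1)) ∧
    (∀ g : G₁, δG g = 1 →
      ((∃ h, δH h = 1 ∧ π₁ h = g) ↔ (∃ h, ι g = κ h))) ∧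
    (∀ e : E, j e = 1 →
      ((∃ g h, δG g = 1 ∧ e = ι g * κ h) ↔ π e ∈ δH.range)) ∧
    (∀ x : H₀,
      ((∃ e, j e = 1 ∧ (π e)⁻¹ * x ∈ δH.range) ↔
       (∃ e, π e = x ∧ j e ∈ δG.range))) :=
  ⟨fun e h _ => Butterfly.exists_conj_κ_eq heqκ e h,
    fun _ => Butterfly.δH_eq_one_of_κ_eq_one hπκ,
    fun _ => Butterfly.π₁_eq_one_iff hιinj hπ₁,
    fun g _ => Butterfly.exists_π₁_eq_iff hπκ hπι hιinj hπ₁ g,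
    fun _ => Butterfly.exists_ι_mul_κ_eq_iff hπκ hjι hjκ hπι hkerπ,
    Butterfly.exists_j_eq_one_iff hπκ hjι hjκ hπι⟩

theorem butterfly_six_term_exact_sequence
    {H₁ H₀ G₁ G₀ : Type*} [Group H₁] [Group H₀] [Group G₁] [Group G₀]
    (δH : H₁ →* H₀) (aH : H₁ → H₀ → H₁)
    (haH1 : ∀ h, aH h 1 = h)
    (haHmul : ∀ h x y, aH h (x * y) = aH (aH h x) y)
    (haHhom : ∀ h h' x, aH (h * h') x = aH h x * aH h' x)
    (hδH : ∀ h x, δH (aH h x) = x⁻¹ * δH h * x)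
    (hpfH : ∀ h₀ h₁, aH h₀ (δH h₁) = h₁⁻¹ * h₀ * h₁)
    (δG : G₁ →* G₀) (aG : G₁ → G₀ → G₁)
    (haG1 : ∀ g, aG g 1 = g)
    (haGmul : ∀ g x y, aG g (x * y) = aG (aG g x) y)
    (haGhom : ∀ g g' x, aG (g * g') x = aG g x * aG g' x)
    (hδG : ∀ g x, δG (aG g x) = x⁻¹ * δG g * x)
    (hpfG : ∀ g₀ g₁, aG g₀ (δG g₁) = g₁⁻¹ * g₀ * g₁)
    {E : Type*} [Group E]
    (κ : H₁ →* E) (ι : G₁ →* E) (π : E →* H₀) (j : E →* G₀)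
    (hπκ : ∀ h, π (κ h) = δH h)
    (hjι : ∀ g, j (ι g) = δG g)
    (hjκ : ∀ h, j (κ h) = 1)
    (hπι : ∀ g, π (ι g) = 1)
    (hιinj : Function.Injective ι)
    (hkerπ : ∀ e, π e = 1 → ∃ g, e = ι g)
    (hπsurj : Function.Surjective π)
    (heqι : ∀ g e, ι (aG g (j e)) = e⁻¹ * ι g * e)
    (heqκ : ∀ h e, κ (aH h (π e)) = e⁻¹ * κ h * e)
    (π₁ : H₁ → G₁) (hπ₁ : ∀ h, δH h = 1 → κ h = ι (π₁ h)) :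
    (∀ (e : E) (h : H₁), j e = 1 → ∃ h', e⁻¹ * κ h * e = κ h') ∧
    (∀ h : H₁, κ h = 1 → δH h = 1) ∧
    (∀ h : H₁, δH h = 1 → (π₁ h = 1 ↔ κ h = 1)) ∧
    (∀ g : G₁, δG g = 1 →
      ((∃ h, δH h = 1 ∧ π₁ h = g) ↔ (∃ h, ι g = κ h))) ∧
    (∀ e : E, j e = 1 →
      ((∃ g h, δG g = 1 ∧ e = ι g * κ h) ↔ π e ∈ δH.range)) ∧
    (∀ x : H₀,
      ((∃ e, j e = 1 ∧ (π e)⁻¹ * x ∈ δH.range) ↔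
       (∃ e, π e = x ∧ j e ∈ δG.range))) :=
  butterfly_six_term_exact_sequence_general δH aH δG κ ι π j hπκ hjι hjκ hπι hιinj hkerπ heqκ π₁ hπ₁
end

section
/- Let (f₁, f₀), (f₁', f₀'), (f₁'', f₀'') be strict morphisms of crossed modules H• → G•, let γ be a homotopy from (f₁, f₀) to (f₁', f₀'), and let γ' be a homotopy from (f₁', f₀') to (f₁'', f₀''). Then the pointwise product x ↦ γ(x)·γ'(x) is a homotopy from (f₁, f₀) to (f₁'', f₀''). -/
/-!
Conditions (a) and (b) compose formally. For (c), expanding `γ(xx')γ'(xx')` by the derivation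
rules leaves `γ(x')` to be moved past `γ'(x)^{f₀'(x')}`; writing `f₀'(x') = f₀(x')·∂γ(x')`, the
Peiffer identity `g^{∂c} = c⁻¹gc` turns this into `γ'(x)^{f₀(x')}·γ(x')`.
-/

theorem mul_mul_eq_mul_mul_of_mul_eq_mul {S : Type*} [Semigroup S] {a a' b b' k m n : S}
    (h : a * m = k * b) (h' : a' * n = m * b') : a * a' * n = k * (b * b') := by
  rw [mul_assoc, h', ← mul_assoc, h, mul_assoc]

section CrossedModule

variable {H₀ G₁ G₀ : Type*}

theorem homotopy_mul_boundary [Monoid G₁] [Monoid G₀] (δ : G₁ →* G₀) {f₀ f₀' f₀'' : H₀ → G₀}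
    {γ γ' : H₀ → G₁} (hγ : ∀ x, f₀ x * δ (γ x) = f₀' x) (hγ' : ∀ x, f₀' x * δ (γ' x) = f₀'' x)
    (x : H₀) : f₀ x * δ (γ x * γ' x) = f₀'' x := by
  rw [map_mul, ← mul_assoc, hγ, hγ']

variable [Group G₁] [Mul G₀] (δ : G₁ → G₀) (act : G₁ → G₀ → G₁)

theorem mul_act_mul_boundary (act_mul : ∀ g x y, act g (x * y) = act (act g x) y)
    (act_boundary : ∀ g c, act g (δ c) = c⁻¹ * g * c) (c g : G₁) (y : G₀) :
    c * act g (y * δ c) = act g y * c := by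
  rw [act_mul, act_boundary]
  group

theorem homotopy_mul_act_mul [Mul H₀] (act_mul : ∀ g x y, act g (x * y) = act (act g x) y)
    (act_mul_left : ∀ g g' x, act (g * g') x = act g x * act g' x)
    (act_boundary : ∀ g c, act g (δ c) = c⁻¹ * g * c) {f₀ f₀' : H₀ → G₀} {γ γ' : H₀ → G₁}
    (hγa : ∀ x, f₀ x * δ (γ x) = f₀' x) (hγc : ∀ x x', γ (x * x') = act (γ x) (f₀ x') * γ x')
    (hγ'c : ∀ x x', γ' (x * x') = act (γ' x) (f₀' x') * γ' x') (x x' : H₀) :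
    γ (x * x') * γ' (x * x') = act (γ x * γ' x) (f₀ x') * (γ x' * γ' x') :=
  calc γ (x * x') * γ' (x * x')
      = act (γ x) (f₀ x') * (γ x' * act (γ' x) (f₀ x' * δ (γ x'))) * γ' x' := by
        rw [hγc, hγ'c, ← hγa x']
        group
    _ = act (γ x) (f₀ x') * (act (γ' x) (f₀ x') * γ x') * γ' x' := by
        rw [mul_act_mul_boundary δ act act_mul act_boundary]
    _ = act (γ x * γ' x) (f₀ x') * (γ x' * γ' x') := by
        rw [act_mul_left]
        group

end CrossedModule

theorem homotopy_composition_general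
    {H₁ H₀ G₁ G₀ : Type*} [Group H₁] [Group H₀] [Group G₁] [Group G₀]
    (δH : H₁ →* H₀)
    (δG : G₁ →* G₀) (aG : G₁ → G₀ → G₁)
    (haGmul : ∀ g x y, aG g (x * y) = aG (aG g x) y)
    (haGhom : ∀ g g' x, aG (g * g') x = aG g x * aG g' x)
    (hpfG : ∀ g₀ g₁, aG g₀ (δG g₁) = g₁⁻¹ * g₀ * g₁)
    (f₁ : H₁ →* G₁) (f₀ : H₀ →* G₀)
    (f₁' : H₁ →* G₁) (f₀' : H₀ →* G₀)
    (f₁'' : H₁ →* G₁) (f₀'' : H₀ →* G₀)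
    (γ : H₀ → G₁)
    (hγa : ∀ x, f₀ x * δG (γ x) = f₀' x)
    (hγb : ∀ (h : H₁) (x y : H₀), x * δH h = y → γ x * f₁' h = f₁ h * γ y)
    (hγc : ∀ x x', γ (x * x') = aG (γ x) (f₀ x') * γ x')
    (γ' : H₀ → G₁)
    (hγ'a : ∀ x, f₀' x * δG (γ' x) = f₀'' x)
    (hγ'b : ∀ (h : H₁) (x y : H₀), x * δH h = y → γ' x * f₁'' h = f₁' h * γ' y)
    (hγ'c : ∀ x x', γ' (x * x') = aG (γ' x) (f₀' x') * γ' x') :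
    (∀ x, f₀ x * δG (γ x * γ' x) = f₀'' x) ∧
    (∀ (h : H₁) (x y : H₀), x * δH h = y →
      (γ x * γ' x) * f₁'' h = f₁ h * (γ y * γ' y)) ∧
    (∀ x x', γ (x * x') * γ' (x * x') = aG (γ x * γ' x) (f₀ x') * (γ x' * γ' x')) :=
  ⟨homotopy_mul_boundary δG hγa hγ'a,
    fun h x y hxy => mul_mul_eq_mul_mul_of_mul_eq_mul (hγb h x y hxy) (hγ'b h x y hxy),
    homotopy_mul_act_mul δG aG haGmul haGhom hpfG hγa hγc hγ'c⟩

theorem homotopy_composition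
    {H₁ H₀ G₁ G₀ : Type*} [Group H₁] [Group H₀] [Group G₁] [Group G₀]
    (δH : H₁ →* H₀) (aH : H₁ → H₀ → H₁)
    (haH1 : ∀ h, aH h 1 = h)
    (haHmul : ∀ h x y, aH h (x * y) = aH (aH h x) y)
    (haHhom : ∀ h h' x, aH (h * h') x = aH h x * aH h' x)
    (hδH : ∀ h x, δH (aH h x) = x⁻¹ * δH h * x)
    (hpfH : ∀ h₀ h₁, aH h₀ (δH h₁) = h₁⁻¹ * h₀ * h₁)
    (δG : G₁ →* G₀) (aG : G₁ → G₀ → G₁)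
    (haG1 : ∀ g, aG g 1 = g)
    (haGmul : ∀ g x y, aG g (x * y) = aG (aG g x) y)
    (haGhom : ∀ g g' x, aG (g * g') x = aG g x * aG g' x)
    (hδG : ∀ g x, δG (aG g x) = x⁻¹ * δG g * x)
    (hpfG : ∀ g₀ g₁, aG g₀ (δG g₁) = g₁⁻¹ * g₀ * g₁)
    (f₁ : H₁ →* G₁) (f₀ : H₀ →* G₀)
    (hf : ∀ h, δG (f₁ h) = f₀ (δH h))
    (hfe : ∀ h x, f₁ (aH h x) = aG (f₁ h) (f₀ x))
    (f₁' : H₁ →* G₁) (f₀' : H₀ →* G₀)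
    (hf' : ∀ h, δG (f₁' h) = f₀' (δH h))
    (hfe' : ∀ h x, f₁' (aH h x) = aG (f₁' h) (f₀' x))
    (f₁'' : H₁ →* G₁) (f₀'' : H₀ →* G₀)
    (hf'' : ∀ h, δG (f₁'' h) = f₀'' (δH h))
    (hfe'' : ∀ h x, f₁'' (aH h x) = aG (f₁'' h) (f₀'' x))
    (γ : H₀ → G₁)
    (hγa : ∀ x, f₀ x * δG (γ x) = f₀' x)
    (hγb : ∀ (h : H₁) (x y : H₀), x * δH h = y → γ x * f₁' h = f₁ h * γ y)
    (hγc : ∀ x x', γ (x * x') = aG (γ x) (f₀ x') * γ x')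
    (γ' : H₀ → G₁)
    (hγ'a : ∀ x, f₀' x * δG (γ' x) = f₀'' x)
    (hγ'b : ∀ (h : H₁) (x y : H₀), x * δH h = y → γ' x * f₁'' h = f₁' h * γ' y)
    (hγ'c : ∀ x x', γ' (x * x') = aG (γ' x) (f₀' x') * γ' x') :
    (∀ x, f₀ x * δG (γ x * γ' x) = f₀'' x) ∧
    (∀ (h : H₁) (x y : H₀), x * δH h = y →
      (γ x * γ' x) * f₁'' h = f₁ h * (γ y * γ' y)) ∧
    (∀ x x', γ (x * x') * γ' (x * x') = aG (γ x * γ' x) (f₀ x') * (γ x' * γ' x')) :=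
  homotopy_composition_general δH δG aG haGmul haGhom hpfG f₁ f₀ f₁' f₀' f₁'' f₀'' γ hγa hγb hγc γ'
    hγ'a hγ'b hγ'c
end

section
/- In the setting of a braided butterfly datum (P, β, ρ, σ, s₁, s₂) for the crossed module (∂: G₁ → G₀), the braiding c: G₀ × G₀ → G₁ defined by β(c(x, y)) = s₂(y)⁻¹ s₁(x)⁻¹ s₂(y) s₁(x) satisfies the two cocycle (hexagon) identities: c(x, yz) = c(x, y)^{z} · c(x, z) and c(xy, z) = c(y, z) · c(x, z)^{y} for all x, y, z ∈ G₀. -/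
/-!
Pulled back along the injective map `β`, both identities are identities in `P` about the
commutators `b⁻¹ a⁻¹ b a` with `a = s₁ x`, `b = s₂ y`: such a commutator is multiplicative in
each argument up to conjugation, and conjugation by `s₁ z` or `s₂ z` in `P` realises the action
of `z` on `G₁`, because `σ ∘ sᵢ = id`.
-/

section Commutator

variable {P : Type*} [Group P]

theorem inv_mul_inv_mul_mul_mul_right (a b₁ b₂ : P) :
    (b₁ * b₂)⁻¹ * a⁻¹ * (b₁ * b₂) * a =
      b₂⁻¹ * (b₁⁻¹ * a⁻¹ * b₁ * a) * b₂ * (b₂⁻¹ * a⁻¹ * b₂ * a) := by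
  group

theorem inv_mul_inv_mul_mul_mul_left (a₁ a₂ b : P) :
    b⁻¹ * (a₁ * a₂)⁻¹ * b * (a₁ * a₂) =
      (b⁻¹ * a₂⁻¹ * b * a₂) * (a₂⁻¹ * (b⁻¹ * a₁⁻¹ * b * a₁) * a₂) := by
  group

end Commutator

theorem braided_butterfly_hexagon_general
    {G₁ G₀ : Type*} [Group G₁] [Group G₀]
    (aG : G₁ → G₀ → G₁)
    {P : Type*} [Group P]
    (β : G₁ →* P) (σ : P →* G₀)
    (hβinj : Function.Injective β)
    (heqβ : ∀ g p, β (aG g (σ p)) = p⁻¹ * β g * p)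
    (s₁ s₂ : G₀ →* P)
    (hσs₁ : ∀ x, σ (s₁ x) = x)
    (hσs₂ : ∀ y, σ (s₂ y) = y)
    (c : G₀ → G₀ → G₁)
    (hc : ∀ x y, β (c x y) = (s₂ y)⁻¹ * (s₁ x)⁻¹ * s₂ y * s₁ x) :
    (∀ x y z : G₀, c x (y * z) = aG (c x y) z * c x z) ∧
    (∀ x y z : G₀, c (x * y) z = c y z * aG (c x z) y) := by
  have conj_s₁ : ∀ g x, β (aG g x) = (s₁ x)⁻¹ * β g * s₁ x := fun g x => by
    simpa only [hσs₁] using heqβ g (s₁ x)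
  have conj_s₂ : ∀ g y, β (aG g y) = (s₂ y)⁻¹ * β g * s₂ y := fun g y => by
    simpa only [hσs₂] using heqβ g (s₂ y)
  refine ⟨fun x y z => hβinj ?_, fun x y z => hβinj ?_⟩
  · rw [map_mul, conj_s₂, hc, hc, hc, map_mul, inv_mul_inv_mul_mul_mul_right]
  · rw [map_mul, conj_s₁, hc, hc, hc, map_mul, inv_mul_inv_mul_mul_mul_left]

theorem braided_butterfly_hexagon
    {G₁ G₀ : Type*} [Group G₁] [Group G₀]
    (δG : G₁ →* G₀) (aG : G₁ → G₀ → G₁)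
    (haG1 : ∀ g, aG g 1 = g)
    (haGmul : ∀ g x y, aG g (x * y) = aG (aG g x) y)
    (haGhom : ∀ g g' x, aG (g * g') x = aG g x * aG g' x)
    (hδG : ∀ g x, δG (aG g x) = x⁻¹ * δG g * x)
    (hpfG : ∀ g₀ g₁, aG g₀ (δG g₁) = g₁⁻¹ * g₀ * g₁)
    {P : Type*} [Group P]
    (β : G₁ →* P) (ρ : P →* G₀ × G₀) (σ : P →* G₀)
    (hβinj : Function.Injective β)
    (hkerρ : ∀ p, ρ p = 1 → ∃ g, p = β g)
    (hσβ : ∀ g, σ (β g) = δG g)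
    (heqβ : ∀ g p, β (aG g (σ p)) = p⁻¹ * β g * p)
    (s₁ s₂ : G₀ →* P)
    (hρs₁ : ∀ x, ρ (s₁ x) = (x, 1))
    (hρs₂ : ∀ y, ρ (s₂ y) = (1, y))
    (hσs₁ : ∀ x, σ (s₁ x) = x)
    (hσs₂ : ∀ y, σ (s₂ y) = y)
    (c : G₀ → G₀ → G₁)
    (hc : ∀ x y, β (c x y) = (s₂ y)⁻¹ * (s₁ x)⁻¹ * s₂ y * s₁ x) :
    (∀ x y z : G₀, c x (y * z) = aG (c x y) z * c x z) ∧
    (∀ x y z : G₀, c (x * y) z = c y z * aG (c x z) y) :=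
  braided_butterfly_hexagon_general aG β σ hβinj heqβ s₁ s₂ hσs₁ hσs₂ c hc
end
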